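/- arXiv:1205.0893 — 3 statements merged into one kernel-verified Lean document; each statement's English description precedes it below -/
import Mathlib

section
/- Let A be a k-algebra, σ a k-algebra automorphism of A, δ a σ-derivation, and E = A[x;σ,δ] the Ore extension. Let ^{σ⁻¹}E denote E with left A-action a·e = σ⁻¹(a)e and the usual right E-action. Then the sequence of E-E-bimodules 0 → E ⊗_A ^{σ⁻¹}E → E ⊗_A E → E → 0 is exact, where the first map is ρ(e ⊗ e') = ex ⊗ e' − e ⊗ xe' (well-defined over A), the second map is the multiplication μ(e ⊗ e') = ee', and the bimodule structure on each tensor product is by left multiplication on the first factor and right multiplication on the second factor. In particular ρ is injective and ker μ = im ρ. -/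
/-!
Since the powers of `x` form a left `A`-basis of `E`, every element of `E ⊗_k E` is congruent,
modulo the balancing relations (twisted by `σ` or not), to a unique normal form `∑ cᵢ ⊗ xⁱ`
with `cᵢ ∈ E`, and the relations are exactly the kernel of the map to the coefficients `(cᵢ)`.
On normal forms `ρ` acts by `(cᵢ) ↦ (cᵢ x − cᵢ₋₁)`, which vanishes only for `c = 0` (look at the
top nonzero coefficient): this is injectivity. For exactness, `e ⊗ xⁱ − e xⁱ ⊗ 1` telescopes
into the image of `ρ`, so every `t` is congruent to `μ(t) ⊗ 1` modulo `im ρ` and the relations.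
-/

open scoped TensorProduct
open CategoryTheory

noncomputable section
set_option synthInstance.maxHeartbeats 1000000
set_option maxHeartbeats 1000000

/-- `E` is an Ore extension `A[x; σ, δ]` of `A` (with `σ` an automorphism): `A` embeds in `E`
via `ι`, the powers of `x` form a basis of `E` as a left `A`-module, `x a = σ(a) x + δ(a)`,
and `δ` is a `σ`-derivation. -/
structure IsOreExtension (k : Type) [CommRing k] (A : Type) [Ring A] [Algebra k A]
    (E : Type) [Ring E] [Algebra k E] (σ : A ≃ₐ[k] A) (δ : A →ₗ[k] A)
    (ι : A →ₐ[k] E) (x : E) : Prop where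
  isDerivation : ∀ a b : A, δ (a * b) = δ a * b + σ a * δ b
  commRule : ∀ a : A, x * ι a = ι (σ a) * x + ι (δ a)
  spans : ∀ e : E, ∃ c : ℕ →₀ A, e = c.sum fun i a => ι a * x ^ i
  indep : ∀ c : ℕ →₀ A, (c.sum fun i a => ι a * x ^ i) = 0 → c = 0

section Stmt1

variable (k : Type) [CommRing k] (A : Type) [Ring A] [Algebra k A]
  (E : Type) [Ring E] [Algebra k E]
  (σ : A ≃ₐ[k] A) (δ : A →ₗ[k] A) (ι : A →ₐ[k] E) (x : E)

/-- The subspace of `E ⊗_k E` by which one divides to obtain `E ⊗_A E`: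
it is spanned by the elements `eа ⊗ f − e ⊗ af`. -/
def relSub : Submodule k (E ⊗[k] E) :=
  Submodule.span k
    {t | ∃ (e f : E) (a : A), t = (e * ι a) ⊗ₜ[k] f - e ⊗ₜ[k] (ι a * f)}

/-- The subspace of `E ⊗_k E` by which one divides to obtain `E ⊗_A {}^{σ⁻¹}E`:
it is spanned by the elements `ea ⊗ f − e ⊗ σ⁻¹(a)f` (the left `A`-action on the second
factor being twisted by `σ⁻¹`). -/
def relSubTw : Submodule k (E ⊗[k] E) :=
  Submodule.span k
    {t | ∃ (e f : E) (a : A), t = (e * ι a) ⊗ₜ[k] f - e ⊗ₜ[k] (ι (σ.symm a) * f)}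

/-- The map `E ⊗_k E → E ⊗_k E`, `e ⊗ e' ↦ ex ⊗ e' − e ⊗ xe'`, which induces
`ρ : E ⊗_A {}^{σ⁻¹}E → E ⊗_A E`. -/
def rhoLift : E ⊗[k] E →ₗ[k] E ⊗[k] E :=
  TensorProduct.map (LinearMap.mulRight k x) LinearMap.id -
    TensorProduct.map LinearMap.id (LinearMap.mulLeft k x)

/-- The multiplication map `E ⊗_k E → E`, which induces `μ : E ⊗_A E → E`. -/
def muLift : E ⊗[k] E →ₗ[k] E := TensorProduct.lift (LinearMap.mul k E)

section

variable {k A E σ δ ι x}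

namespace Submodule

variable {R M N P : Type*} [Ring R] [AddCommGroup M] [AddCommGroup N] [AddCommGroup P]
  [Module R M] [Module R N] [Module R P] {p : Submodule R M} {q : Submodule R N}

theorem injective_mapQ_iff {f : M →ₗ[R] N} (h : p ≤ q.comap f) :
    Function.Injective (p.mapQ q f h) ↔ q.comap f ≤ p := by
  rw [← LinearMap.ker_eq_bot, ker_mapQ, ← le_bot_iff, map_le_iff_le_comap, comap_bot, ker_mkQ]

theorem exact_mapQ_liftQ {f : M →ₗ[R] N} {g : N →ₗ[R] P} (hf : p ≤ q.comap f)
    (hg : q ≤ LinearMap.ker g) (h : LinearMap.ker g = LinearMap.range f ⊔ q) :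
    Function.Exact (p.mapQ q f hf) (q.liftQ g hg) := by
  rw [LinearMap.exact_iff, ker_liftQ, range_mapQ, h, map_sup, mkQ_map_self, sup_bot_eq]

end Submodule

theorem Finsupp.eq_zero_of_forall_apply_eq_apply_succ_mul {M : Type*} [MulZeroClass M]
    (c : ℕ →₀ M) (y : M) (h : ∀ j, c j = c (j + 1) * y) : c = 0 := by
  by_contra hc
  have hne : c.support.Nonempty := Finsupp.support_nonempty_iff.mpr hc
  have hlast : c (c.support.max' hne + 1) = 0 :=
    Finsupp.notMem_support_iff.mp fun hmem => by
      have := c.support.le_max' _ hmem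
      omega
  exact Finsupp.mem_support_iff.mp (c.support.max'_mem hne) (by rw [h, hlast, zero_mul])

def sumMulPow (ι : A →ₐ[k] E) (x : E) : (ℕ →₀ A) →ₗ[k] E :=
  Finsupp.lsum k fun i => LinearMap.mulRight k (x ^ i) ∘ₗ ι.toLinearMap

theorem sumMulPow_apply (c : ℕ →₀ A) : sumMulPow ι x c = c.sum fun i a => ι a * x ^ i := rfl

variable (k) in
def sumTmulPow (x : E) : (ℕ →₀ E) →ₗ[k] E ⊗[k] E :=
  Finsupp.lsum k fun i => (TensorProduct.mk k E E).flip (x ^ i)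

theorem sumTmulPow_apply (c : ℕ →₀ E) :
    sumTmulPow k x c = c.sum fun i e => e ⊗ₜ[k] (x ^ i) := rfl

theorem sumTmulPow_single (i : ℕ) (e : E) :
    sumTmulPow k x (Finsupp.single i e) = e ⊗ₜ[k] (x ^ i) :=
  Finsupp.lsum_single _ _ _ _

/-- `E ⊗_A E` with the right `A`-action on the first factor twisted by `τ`
is the quotient of `E ⊗_k E` by this submodule. -/
def relSubOf (ι τ : A →ₐ[k] E) : Submodule k (E ⊗[k] E) :=
  Submodule.span k {t | ∃ (e f : E) (a : A), t = (e * τ a) ⊗ₜ[k] f - e ⊗ₜ[k] (ι a * f)}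

theorem tmul_sub_tmul_mem_relSubOf (τ : A →ₐ[k] E) (e f : E) (a : A) :
    (e * τ a) ⊗ₜ[k] f - e ⊗ₜ[k] (ι a * f) ∈ relSubOf ι τ :=
  Submodule.subset_span ⟨e, f, a, rfl⟩

theorem relSub_eq_relSubOf : relSub k A E ι = relSubOf ι ι := rfl

theorem relSubTw_eq_relSubOf : relSubTw k A E σ ι = relSubOf ι (ι.comp σ.toAlgHom) := by
  rw [relSubTw, relSubOf]
  congr 1
  ext t
  constructor
  · rintro ⟨e, f, a, rfl⟩
    exact ⟨e, f, σ.symm a, by simp⟩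
  · rintro ⟨e, f, a, rfl⟩
    exact ⟨e, f, σ a, by simp⟩

theorem map_mulLeft_relSubOf_le (τ : A →ₐ[k] E) (c : E) :
    (relSubOf ι τ).map (TensorProduct.map (LinearMap.mulLeft k c) LinearMap.id) ≤
      relSubOf ι τ := by
  refine (Submodule.map_span_le _ _ _).mpr ?_
  rintro _ ⟨e, f, a, rfl⟩
  simpa [mul_assoc] using tmul_sub_tmul_mem_relSubOf τ (c * e) f a

theorem map_mulRight_relSubOf_le (τ : A →ₐ[k] E) (c : E) :
    (relSubOf ι τ).map (TensorProduct.map LinearMap.id (LinearMap.mulRight k c)) ≤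
      relSubOf ι τ := by
  refine (Submodule.map_span_le _ _ _).mpr ?_
  rintro _ ⟨e, f, a, rfl⟩
  simpa [mul_assoc] using tmul_sub_tmul_mem_relSubOf τ e (f * c) a

theorem rhoLift_tmul (e f : E) :
    rhoLift k E x (e ⊗ₜ[k] f) = (e * x) ⊗ₜ[k] f - e ⊗ₜ[k] (x * f) := rfl

theorem muLift_tmul (e f : E) : muLift k E (e ⊗ₜ[k] f) = e * f := rfl

theorem muLift_comp_rhoLift : muLift k E ∘ₗ rhoLift k E x = 0 :=
  TensorProduct.ext' fun e f => by
    simp only [LinearMap.comp_apply, rhoLift_tmul, map_sub, muLift_tmul, mul_assoc, sub_self,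
      LinearMap.zero_apply]

theorem relSub_le_ker_muLift : relSub k A E ι ≤ LinearMap.ker (muLift k E) := by
  rw [relSub, Submodule.span_le]
  rintro _ ⟨e, f, a, rfl⟩
  rw [SetLike.mem_coe, LinearMap.mem_ker, map_sub, muLift_tmul, muLift_tmul, mul_assoc, sub_self]

theorem rhoLift_sumTmulPow (c : ℕ →₀ E) :
    rhoLift k E x (sumTmulPow k x c) =
      sumTmulPow k x (c.mapRange (· * x) (zero_mul x) - c.mapDomain Nat.succ) := by
  induction c using Finsupp.induction_linear with
  | zero => simp
  | add c d hc hd =>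
    rw [map_add, map_add, hc, hd, ← map_add, Finsupp.mapRange_add (add_mul · · x),
      Finsupp.mapDomain_add]
    congr 1
    abel
  | single i e =>
    rw [Finsupp.mapRange_single, Finsupp.mapDomain_single, map_sub, sumTmulPow_single,
      sumTmulPow_single, sumTmulPow_single, rhoLift_tmul, pow_succ']

theorem tmul_pow_sub_mem_range_rhoLift (e : E) (i : ℕ) :
    e ⊗ₜ[k] (x ^ i) - (e * x ^ i) ⊗ₜ[k] (1 : E) ∈ LinearMap.range (rhoLift k E x) := by
  induction i generalizing e with
  | zero => simp
  | succ n ih =>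
    have h : e ⊗ₜ[k] (x ^ (n + 1)) - (e * x ^ (n + 1)) ⊗ₜ[k] (1 : E) =
        ((e * x) ⊗ₜ[k] (x ^ n) - (e * x * x ^ n) ⊗ₜ[k] (1 : E)) -
          rhoLift k E x (e ⊗ₜ[k] (x ^ n)) := by
      rw [rhoLift_tmul, ← pow_succ', mul_assoc, ← pow_succ']
      abel
    rw [h]
    exact sub_mem (ih _) (LinearMap.mem_range_self _ _)

theorem sumTmulPow_sub_mem_range_rhoLift (c : ℕ →₀ E) :
    sumTmulPow k x c - muLift k E (sumTmulPow k x c) ⊗ₜ[k] (1 : E) ∈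
      LinearMap.range (rhoLift k E x) := by
  simp only [sumTmulPow_apply, Finsupp.sum, map_sum, muLift_tmul, TensorProduct.sum_tmul,
    ← Finset.sum_sub_distrib]
  exact Submodule.sum_mem _ fun i _ => tmul_pow_sub_mem_range_rhoLift (c i) i

namespace IsOreExtension

variable (hOre : IsOreExtension k A E σ δ ι x)
include hOre

theorem bijective_sumMulPow : Function.Bijective (sumMulPow ι x) :=
  ⟨(injective_iff_map_eq_zero _).mpr hOre.indep,
    fun e => (hOre.spans e).imp fun _ hc => hc.symm⟩

def coeffs : E →ₗ[k] (ℕ →₀ A) :=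
  (LinearEquiv.ofBijective _ hOre.bijective_sumMulPow).symm.toLinearMap

theorem sumMulPow_coeffs (e : E) : sumMulPow ι x (hOre.coeffs e) = e :=
  (LinearEquiv.ofBijective _ hOre.bijective_sumMulPow).apply_symm_apply e

theorem coeffs_mul_left (a : A) (f : E) :
    hOre.coeffs (ι a * f) = (hOre.coeffs f).mapRange (a * ·) (mul_zero a) := by
  apply hOre.bijective_sumMulPow.injective
  rw [sumMulPow_coeffs]
  conv_lhs => rw [← hOre.sumMulPow_coeffs f]
  simp only [sumMulPow_apply, Finsupp.mul_sum, Finsupp.sum_mapRange_index, map_zero, zero_mul,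
    implies_true, map_mul, mul_assoc]

theorem coeffs_pow (i : ℕ) : hOre.coeffs (x ^ i) = Finsupp.single i 1 := by
  apply hOre.bijective_sumMulPow.injective
  rw [sumMulPow_coeffs, sumMulPow_apply, Finsupp.sum_single_index (by simp), map_one, one_mul]

/-- The coordinates of `E ⊗_k E` over the free right factor, with `A` acting on the first
factor through `τ`. -/
def tensorCoeffs (τ : A →ₐ[k] E) : E ⊗[k] E →ₗ[k] (ℕ →₀ E) :=
  TensorProduct.lift <| LinearMap.mk₂ k
    (fun e f => (hOre.coeffs f).mapRange (e * τ ·) (by simp))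
    (fun _ _ _ => by ext; simp [add_mul]) (fun _ _ _ => by ext; simp)
    (fun _ _ _ => by ext; simp [mul_add]) (fun _ _ _ => by ext; simp)

theorem tensorCoeffs_tmul (τ : A →ₐ[k] E) (e f : E) :
    hOre.tensorCoeffs τ (e ⊗ₜ[k] f) = (hOre.coeffs f).mapRange (e * τ ·) (by simp) := rfl

theorem tensorCoeffs_tmul_pow (τ : A →ₐ[k] E) (e : E) (i : ℕ) :
    hOre.tensorCoeffs τ (e ⊗ₜ[k] (x ^ i)) = Finsupp.single i e := by
  rw [tensorCoeffs_tmul, coeffs_pow, Finsupp.mapRange_single, map_one, mul_one]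

theorem tensorCoeffs_sumTmulPow (τ : A →ₐ[k] E) (c : ℕ →₀ E) :
    hOre.tensorCoeffs τ (sumTmulPow k x c) = c := by
  rw [sumTmulPow_apply, map_finsuppSum]
  simp only [tensorCoeffs_tmul_pow, Finsupp.sum_single]

theorem sub_sumTmulPow_tensorCoeffs_mem (τ : A →ₐ[k] E) (t : E ⊗[k] E) :
    t - sumTmulPow k x (hOre.tensorCoeffs τ t) ∈ relSubOf ι τ := by
  induction t using TensorProduct.induction_on with
  | zero => simp
  | add t s ht hs =>
    rw [map_add, map_add, add_sub_add_comm]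
    exact add_mem ht hs
  | tmul e f =>
    have hf : e ⊗ₜ[k] f = (hOre.coeffs f).sum fun i a => e ⊗ₜ[k] (ι a * x ^ i) := by
      conv_lhs => rw [← hOre.sumMulPow_coeffs f]
      rw [sumMulPow_apply, Finsupp.sum, Finsupp.sum, TensorProduct.tmul_sum]
    have hΨ : sumTmulPow k x (hOre.tensorCoeffs τ (e ⊗ₜ[k] f)) =
        (hOre.coeffs f).sum fun i a => (e * τ a) ⊗ₜ[k] (x ^ i) := by
      rw [tensorCoeffs_tmul, sumTmulPow_apply, Finsupp.sum_mapRange_index (by simp)]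
    rw [hΨ, hf, ← Finsupp.sum_sub]
    exact Submodule.sum_mem _ fun i _ => by
      simpa only [neg_sub] using neg_mem (tmul_sub_tmul_mem_relSubOf τ e (x ^ i) (hOre.coeffs f i))

theorem mem_relSubOf_iff (τ : A →ₐ[k] E) (t : E ⊗[k] E) :
    t ∈ relSubOf ι τ ↔ hOre.tensorCoeffs τ t = 0 := by
  refine ⟨fun ht => ?_, fun ht => ?_⟩
  · refine (Submodule.span_le (p := LinearMap.ker _)).mpr ?_ ht
    rintro _ ⟨e, f, a, rfl⟩
    ext j
    simp [tensorCoeffs_tmul, coeffs_mul_left, mul_assoc]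
  · simpa [ht] using hOre.sub_sumTmulPow_tensorCoeffs_mem τ t

theorem relSubTw_le_comap_rhoLift :
    relSubTw k A E σ ι ≤ (relSub k A E ι).comap (rhoLift k E x) := by
  rw [relSubTw_eq_relSubOf, relSubOf, Submodule.span_le]
  rintro _ ⟨e, f, b, rfl⟩
  have key : rhoLift k E x ((e * ι.comp σ.toAlgHom b) ⊗ₜ[k] f - e ⊗ₜ[k] (ι b * f)) =
      ((e * x * ι b) ⊗ₜ[k] f - (e * x) ⊗ₜ[k] (ι b * f)) -
      ((e * ι (δ b)) ⊗ₜ[k] f - e ⊗ₜ[k] (ι (δ b) * f)) -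
      ((e * ι (σ b)) ⊗ₜ[k] (x * f) - e ⊗ₜ[k] (ι (σ b) * (x * f))) := by
    rw [map_sub, rhoLift_tmul, rhoLift_tmul, ← mul_assoc x, hOre.commRule, mul_assoc e x,
      hOre.commRule]
    simp only [AlgHom.comp_apply, AlgEquiv.toAlgHom_apply, mul_add, add_mul,
      mul_assoc, TensorProduct.tmul_add, TensorProduct.add_tmul]
    abel
  rw [SetLike.mem_coe, Submodule.mem_comap, key, relSub_eq_relSubOf]
  exact sub_mem (sub_mem (tmul_sub_tmul_mem_relSubOf ι _ _ _)
    (tmul_sub_tmul_mem_relSubOf ι _ _ _)) (tmul_sub_tmul_mem_relSubOf ι _ _ _)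

theorem comap_rhoLift_relSub_le :
    (relSub k A E ι).comap (rhoLift k E x) ≤ relSubTw k A E σ ι := by
  intro t ht
  set c := hOre.tensorCoeffs (ι.comp σ.toAlgHom) t
  have hct : t - sumTmulPow k x c ∈ relSubTw k A E σ ι := by
    rw [relSubTw_eq_relSubOf]
    exact hOre.sub_sumTmulPow_tensorCoeffs_mem _ t
  have hρ : rhoLift k E x (sumTmulPow k x c) ∈ relSub k A E ι := by
    simpa using sub_mem ht (hOre.relSubTw_le_comap_rhoLift hct)
  rw [rhoLift_sumTmulPow, relSub_eq_relSubOf, hOre.mem_relSubOf_iff,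
    tensorCoeffs_sumTmulPow, sub_eq_zero] at hρ
  have hc : c = 0 := c.eq_zero_of_forall_apply_eq_apply_succ_mul x fun j => by
    have hshift : c.mapDomain Nat.succ (j + 1) = c j :=
      Finsupp.mapDomain_apply Nat.succ_injective c j
    simpa [hshift] using (DFunLike.congr_fun hρ (j + 1)).symm
  simpa [hc] using hct

theorem ker_muLift :
    LinearMap.ker (muLift k E) = LinearMap.range (rhoLift k E x) ⊔ relSub k A E ι := by
  refine le_antisymm (fun t ht => ?_)
    (sup_le (LinearMap.range_le_ker_iff.mpr muLift_comp_rhoLift) relSub_le_ker_muLift)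
  set c := hOre.tensorCoeffs ι t
  have hct : t - sumTmulPow k x c ∈ relSub k A E ι := hOre.sub_sumTmulPow_tensorCoeffs_mem ι t
  have hμ : muLift k E (sumTmulPow k x c) = 0 := by
    simpa [LinearMap.mem_ker.mp ht] using relSub_le_ker_muLift hct
  have hρ := sumTmulPow_sub_mem_range_rhoLift (k := k) (x := x) c
  rw [hμ, TensorProduct.zero_tmul, sub_zero] at hρ
  rw [← sub_add_cancel t (sumTmulPow k x c), add_comm]
  exact Submodule.add_mem_sup hρ hct

end IsOreExtension

end

/-- **The fundamental short exact sequence of an Ore extension.**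
For an Ore extension `E = A[x; σ, δ]` with `σ` an automorphism, the sequence of
`E`-`E`-bimodules `0 → E ⊗_A {}^{σ⁻¹}E → E ⊗_A E → E → 0` is exact, where the first map is
`ρ(e ⊗ e') = ex ⊗ e' − e ⊗ xe'` and the second is the multiplication `μ`.  Here
`E ⊗_A E` and `E ⊗_A {}^{σ⁻¹}E` are realized as quotients of `E ⊗_k E` by `relSub` and
`relSubTw`; the first two conjuncts say that `ρ` and `μ` are well defined, the next two
that the bimodule actions descend (so the quotients are `E`-`E`-bimodules and the maps,
being induced by bimodule maps, are maps of bimodules), and the last three give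
injectivity of `ρ`, exactness in the middle, and surjectivity of `μ`. -/
theorem ore_extension_short_exact_sequence (hOre : IsOreExtension k A E σ δ ι x) :
    ∃ (h₁ : relSubTw k A E σ ι ≤ (relSub k A E ι).comap (rhoLift k E x))
      (h₂ : relSub k A E ι ≤ LinearMap.ker (muLift k E)),
      (∀ c : E, (relSub k A E ι).map
          (TensorProduct.map (LinearMap.mulLeft k c) LinearMap.id) ≤ relSub k A E ι) ∧
      (∀ c : E, (relSub k A E ι).map
          (TensorProduct.map LinearMap.id (LinearMap.mulRight k c)) ≤ relSub k A E ι) ∧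
      (∀ c : E, (relSubTw k A E σ ι).map
          (TensorProduct.map (LinearMap.mulLeft k c) LinearMap.id) ≤ relSubTw k A E σ ι) ∧
      (∀ c : E, (relSubTw k A E σ ι).map
          (TensorProduct.map LinearMap.id (LinearMap.mulRight k c)) ≤ relSubTw k A E σ ι) ∧
      Function.Injective
        ⇑(Submodule.mapQ (relSubTw k A E σ ι) (relSub k A E ι) (rhoLift k E x) h₁) ∧
      Function.Exact
        ⇑(Submodule.mapQ (relSubTw k A E σ ι) (relSub k A E ι) (rhoLift k E x) h₁)
        ⇑(Submodule.liftQ (relSub k A E ι) (muLift k E) h₂) ∧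
      Function.Surjective ⇑(Submodule.liftQ (relSub k A E ι) (muLift k E) h₂) := by
  refine ⟨hOre.relSubTw_le_comap_rhoLift, relSub_le_ker_muLift,
    map_mulLeft_relSubOf_le ι, map_mulRight_relSubOf_le ι, ?_, ?_,
    (Submodule.injective_mapQ_iff _).mpr hOre.comap_rhoLift_relSub_le,
    Submodule.exact_mapQ_liftQ _ _ hOre.ker_muLift,
    fun e => ⟨Submodule.Quotient.mk (e ⊗ₜ[k] 1), mul_one e⟩⟩
  all_goals rw [relSubTw_eq_relSubOf]
  exacts [map_mulLeft_relSubOf_le _, map_mulRight_relSubOf_le _]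

end Stmt1
end
end

section
/- Let A be a k-algebra, σ a k-algebra automorphism of A, δ a σ-derivation, and E = A[x;σ,δ]. For n ≥ 0 consider the E-E-bimodules E ⊗_k A^{⊗n} ⊗_k E and E ⊗_k A^{⊗n} ⊗_k ^{σ⁻¹}E (left E-action on the first tensor factor, right E-action on the last; in the second module the last factor carries the twisted left A-action a·e = σ⁻¹(a)e used in forming the differential), with differentials b'_{0,n}(a_0⊗a_1⊗…⊗a_{n+1}) = Σ_{i=0}^{n} (−1)^i a_0⊗…⊗a_i a_{i+1}⊗…⊗a_{n+1} and b'_{1,n}(a_0⊗a_1⊗…⊗a_{n+1}) = Σ_{i=0}^{n−1} (−1)^i a_0⊗…⊗a_i a_{i+1}⊗…⊗a_{n+1} + (−1)^n a_0⊗…⊗a_{n−1}⊗σ⁻¹(a_n)a_{n+1}. Define E-E-bilinear maps ψ'_n: E ⊗ A^{⊗n} ⊗ ^{σ⁻¹}E → E ⊗ A^{⊗n} ⊗ E by ψ'_n(1⊗a_1⊗…⊗a_n⊗1) = x⊗σ⁻¹(a_1)⊗…⊗σ⁻¹(a_n)⊗1 − 1⊗a_1⊗…⊗a_n⊗x − Σ_{j=1}^{n}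 1⊗a_1⊗…⊗a_{j−1}⊗δσ⁻¹(a_j)⊗σ⁻¹(a_{j+1})⊗…⊗σ⁻¹(a_n)⊗1. Then ψ' is a morphism of complexes of E-E-bimodules, i.e., b'_{0,n} ∘ ψ'_n = ψ'_{n−1} ∘ b'_{1,n} for all n ≥ 1. -/
open scoped TensorProduct
open CategoryTheory

noncomputable section
set_option synthInstance.maxHeartbeats 1000000
set_option maxHeartbeats 1000000

section Bar

/-- Merging of two adjacent entries of a tuple: `(a_0, …, a_n) ↦
(a_0, …, a_{i-1}, a_i * a_{i+1}, a_{i+2}, …, a_n)`. -/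
def mergeAt {A : Type} [Mul A] {n : ℕ} (a : Fin (n + 1) → A) (i : Fin n) : Fin n → A :=
  fun j =>
    if (j : ℕ) < (i : ℕ) then a (Fin.castSucc j)
    else if (j : ℕ) = (i : ℕ) then a (Fin.castSucc j) * a (Fin.succ j)
    else a (Fin.succ j)

variable (k : Type) [CommRing k] (A : Type) [Ring A] [Algebra k A]
  (E : Type) [Ring E] [Algebra k E]

/-- The `n`-th term `E ⊗ A^{⊗n} ⊗ E` of the bar-type complexes. -/
abbrev BarObj (n : ℕ) : Type := (E ⊗[k] TensorPower k n A) ⊗[k] E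

end Bar

/-!
Split `b'` into its first face, its inner faces and its last face, and `ψ'` into
`L - R - D`, where `L` multiplies by `x` on the left and applies `σ⁻¹` to every entry, `R`
multiplies by `x` on the right, and `D` inserts `δσ⁻¹` at one place. Each face intertwines `ψ'`
on its own. For the first face, `x σ⁻¹(a₁) = a₁ x + δσ⁻¹(a₁)` supplies the extra term in which `D`
acts at the first place; for the last face, `x σ⁻¹(aₙ) = aₙ x + δσ⁻¹(aₙ)` does the same at the
last place (this is why `b'₁` twists the last entry by `σ⁻¹`). For the inner faces, `σ⁻¹` is
multiplicative and `δσ⁻¹(ab) = δσ⁻¹(a) σ⁻¹(b) + a δσ⁻¹(b)`.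
-/

section OreChainMap

variable {k : Type} [CommRing k] {A : Type} [Ring A] [Algebra k A] {E : Type} [Ring E]
  [Algebra k E] {n : ℕ}

theorem mergeAt_comp {M N F : Type} [Mul M] [Mul N] [FunLike F M N] [MulHomClass F M N]
    (g : F) (a : Fin (n + 1) → M) (i : Fin n) :
    mergeAt (fun l => g (a l)) i = fun l => g (mergeAt a i l) := by
  funext l
  simp only [mergeAt]
  split_ifs <;> simp only [map_mul]

/-- The `j`-th tuple in the sum defining `ψ'`: `(a_0, …, a_{j-1}, δσ⁻¹(a_j), σ⁻¹(a_{j+1}), …)`. -/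
def deltaAt (σ : A ≃ₐ[k] A) (δ : A →ₗ[k] A) (a : Fin n → A) (j : Fin n) : Fin n → A :=
  fun i => if (i : ℕ) < j then a i else if i = j then δ (σ.symm (a j)) else σ.symm (a i)

section deltaAt

variable (σ : A ≃ₐ[k] A) (δ : A →ₗ[k] A)

theorem deltaAt_zero_zero (a : Fin (n + 1) → A) : deltaAt σ δ a 0 0 = δ (σ.symm (a 0)) := by
  simp [deltaAt]

theorem tail_deltaAt_zero (a : Fin (n + 1) → A) :
    Fin.tail (deltaAt σ δ a 0) = fun l => σ.symm (a l.succ) := by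
  funext l
  simp [deltaAt, Fin.tail, Fin.ext_iff]

theorem deltaAt_succ_zero (a : Fin (n + 1) → A) (j : Fin n) : deltaAt σ δ a j.succ 0 = a 0 := by
  simp [deltaAt]

theorem tail_deltaAt_succ (a : Fin (n + 1) → A) (j : Fin n) :
    Fin.tail (deltaAt σ δ a j.succ) = deltaAt σ δ (Fin.tail a) j := by
  funext l
  simp only [deltaAt, Fin.tail, Fin.val_succ, Fin.ext_iff]
  split_ifs <;> first | rfl | omega

theorem init_deltaAt_castSucc (a : Fin (n + 1) → A) (j : Fin n) :
    Fin.init (deltaAt σ δ a j.castSucc) = deltaAt σ δ (Fin.init a) j := by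
  funext l
  simp [deltaAt, Fin.init, Fin.ext_iff]

theorem deltaAt_castSucc_last (a : Fin (n + 1) → A) (j : Fin n) :
    deltaAt σ δ a j.castSucc (Fin.last n) = σ.symm (a (Fin.last n)) := by
  simp [deltaAt, Fin.ext_iff, j.isLt.not_gt, j.isLt.ne']

theorem init_deltaAt_last (a : Fin (n + 1) → A) :
    Fin.init (deltaAt σ δ a (Fin.last n)) = Fin.init a := by
  funext l
  simp [deltaAt, Fin.init, l.isLt]

theorem deltaAt_last_last (a : Fin (n + 1) → A) :
    deltaAt σ δ a (Fin.last n) (Fin.last n) = δ (σ.symm (a (Fin.last n))) := by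
  simp [deltaAt]

end deltaAt

section mergeAt_deltaAt

variable (σ : A ≃ₐ[k] A) (δ : A →ₗ[k] A)

theorem mergeAt_deltaAt_castSucc_of_lt (a : Fin (n + 1) → A) {i j : Fin n} (h : j < i) :
    mergeAt (deltaAt σ δ a j.castSucc) i = deltaAt σ δ (mergeAt a i) j := by
  funext l
  have h' : (j : ℕ) < i := h
  simp only [mergeAt, deltaAt, Fin.val_castSucc, Fin.val_succ, Fin.ext_iff]
  split_ifs <;> first | rfl | omega | rw [map_mul]

theorem mergeAt_deltaAt_succ_of_lt (a : Fin (n + 1) → A) {i j : Fin n} (h : i < j) :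
    mergeAt (deltaAt σ δ a j.succ) i = deltaAt σ δ (mergeAt a i) j := by
  funext l
  have h' : (i : ℕ) < j := h
  simp only [mergeAt, deltaAt, Fin.val_castSucc, Fin.val_succ, Fin.ext_iff]
  split_ifs <;> first | rfl | omega

theorem mergeAt_deltaAt_castSucc_self (a : Fin (n + 1) → A) (i : Fin n) :
    mergeAt (deltaAt σ δ a i.castSucc) i = Function.update (deltaAt σ δ (mergeAt a i) i) i
      (δ (σ.symm (a i.castSucc)) * σ.symm (a i.succ)) := by
  funext l
  rcases eq_or_ne l i with rfl | hl
  · simp [mergeAt, deltaAt, Fin.ext_iff]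
  · have hl' : (l : ℕ) ≠ i := Fin.val_ne_of_ne hl
    simp only [Function.update_of_ne hl, mergeAt, deltaAt, Fin.val_castSucc, Fin.val_succ,
      Fin.ext_iff]
    split_ifs <;> first | rfl | omega

theorem mergeAt_deltaAt_succ_self (a : Fin (n + 1) → A) (i : Fin n) :
    mergeAt (deltaAt σ δ a i.succ) i = Function.update (deltaAt σ δ (mergeAt a i) i) i
      (a i.castSucc * δ (σ.symm (a i.succ))) := by
  funext l
  rcases eq_or_ne l i with rfl | hl
  · simp [mergeAt, deltaAt]
  · have hl' : (l : ℕ) ≠ i := Fin.val_ne_of_ne hl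
    simp only [Function.update_of_ne hl, mergeAt, deltaAt, Fin.val_castSucc, Fin.val_succ,
      Fin.ext_iff]
    split_ifs <;> first | rfl | omega

theorem deltaAt_mergeAt_self (hδ : ∀ a b : A, δ (a * b) = δ a * b + σ a * δ b)
    (a : Fin (n + 1) → A) (i : Fin n) :
    deltaAt σ δ (mergeAt a i) i i = δ (σ.symm (a i.castSucc)) * σ.symm (a i.succ)
      + a i.castSucc * δ (σ.symm (a i.succ)) := by
  simp [deltaAt, mergeAt, hδ]

/-- The two terms on the left in which `δσ⁻¹` hits one of the merged entries add up, by the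
twisted Leibniz rule, to the term on the right in which it hits their product; the other terms
match one to one. -/
theorem sum_mergeAt_deltaAt {M : Type} [AddCommMonoid M] [Module k M]
    (hδ : ∀ a b : A, δ (a * b) = δ a * b + σ a * δ b)
    (g : MultilinearMap k (fun _ : Fin n => A) M) (a : Fin (n + 1) → A) (i : Fin n) :
    ∑ j : Fin (n + 1), g (mergeAt (deltaAt σ δ a j) i)
      = ∑ j : Fin n, g (deltaAt σ δ (mergeAt a i) j) := by
  have hterm : ∀ j : Fin n, g (deltaAt σ δ (mergeAt a i) j)
      = g (mergeAt (deltaAt σ δ a (i.succ.succAbove j)) i)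
        + if j = i then g (mergeAt (deltaAt σ δ a i.succ) i) else 0 := by
    intro j
    rcases lt_trichotomy j i with h | rfl | h
    · rw [Fin.succAbove_of_castSucc_lt _ _ (Fin.castSucc_lt_succ_iff.2 h.le),
        mergeAt_deltaAt_castSucc_of_lt σ δ a h, if_neg h.ne, add_zero]
    · rw [Fin.succAbove_of_castSucc_lt _ _ Fin.castSucc_lt_succ, if_pos rfl,
        mergeAt_deltaAt_castSucc_self, mergeAt_deltaAt_succ_self, ← g.map_update_add,
        ← deltaAt_mergeAt_self σ δ hδ, Function.update_eq_self]
    · rw [Fin.succAbove_of_le_castSucc _ _ (Fin.succ_le_castSucc_iff.2 h),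
        mergeAt_deltaAt_succ_of_lt σ δ a h, if_neg h.ne', add_zero]
  rw [Fin.sum_univ_succAbove _ i.succ, Finset.sum_congr rfl fun j _ => hterm j,
    Finset.sum_add_distrib, Finset.sum_ite_eq' Finset.univ, if_pos (Finset.mem_univ _), add_comm]

end mergeAt_deltaAt

-- The `ℤ`-action that instance search finds on `BarObj` comes from the ring structure of a
-- tensor product of algebras, and `smul_sub`, `smul_add`, `Finset.smul_sum`,
-- `Finset.sum_sub_distrib` do not unify with it syntactically; these restatements do.
theorem BarObj.zsmul_sub (r : ℤ) (u v : BarObj k A E n) : r • (u - v) = r • u - r • v :=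
  smul_sub r u v

theorem BarObj.zsmul_add (r : ℤ) (u v : BarObj k A E n) : r • (u + v) = r • u + r • v :=
  smul_add r u v

theorem BarObj.zsmul_sum {ι : Type} (s : Finset ι) (r : ℤ) (g : ι → BarObj k A E n) :
    r • ∑ i ∈ s, g i = ∑ i ∈ s, r • g i :=
  Finset.smul_sum

theorem BarObj.sum_sub_distrib {ι : Type} (s : Finset ι) (g h : ι → BarObj k A E n) :
    ∑ i ∈ s, (g i - h i) = ∑ i ∈ s, g i - ∑ i ∈ s, h i :=
  Finset.sum_sub_distrib g h

variable (k) in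
def barTensor (e : E) (a : Fin n → A) (f : E) : BarObj k A E n :=
  (e ⊗ₜ[k] PiTensorProduct.tprod k a) ⊗ₜ[k] f

theorem barTensor_add_left (e e' : E) (a : Fin n → A) (f : E) :
    barTensor k (e + e') a f = barTensor k e a f + barTensor k e' a f := by
  simp only [barTensor, TensorProduct.add_tmul]

theorem barTensor_add_right (e : E) (a : Fin n → A) (f f' : E) :
    barTensor k e a (f + f') = barTensor k e a f + barTensor k e a f' :=
  TensorProduct.tmul_add _ _ _

/-- The value of `ψ'_n` on `e ⊗ a_0 ⊗ ⋯ ⊗ a_{n-1} ⊗ f`. -/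
def psiValue (σ : A ≃ₐ[k] A) (δ : A →ₗ[k] A) (x e : E) (a : Fin n → A) (f : E) :
    BarObj k A E n :=
  barTensor k (e * x) (fun i => σ.symm (a i)) f - barTensor k e a (x * f)
    - ∑ j, barTensor k e (deltaAt σ δ a j) f

section faces

variable (k)

def firstFace (φ : A → E) (e : E) (a : Fin (n + 1) → A) (f : E) : BarObj k A E n :=
  barTensor k (e * φ (a 0)) (Fin.tail a) f

def innerFaces (e : E) (a : Fin (n + 1) → A) (f : E) : BarObj k A E n :=
  ∑ i : Fin n, ((-1 : ℤ) ^ ((i : ℕ) + 1)) • barTensor k e (mergeAt a i) f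

/-- `b'₀` uses `φ = ι` and `b'₁` uses `φ = ι ∘ σ⁻¹`. -/
def lastFace (φ : A → E) (e : E) (a : Fin (n + 1) → A) (f : E) : BarObj k A E n :=
  ((-1 : ℤ) ^ (n + 1)) • barTensor k e (Fin.init a) (φ (a (Fin.last n)) * f)

end faces

variable {σ : A ≃ₐ[k] A} {δ : A →ₗ[k] A} {ι : A →ₐ[k] E} {x : E}

theorem firstFace_psiValue (hcomm : ∀ a : A, x * ι a = ι (σ a) * x + ι (δ a))
    (e f : E) (a : Fin (n + 1) → A) :
    firstFace k ι (e * x) (fun i => σ.symm (a i)) f - firstFace k ι e a (x * f)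
      - ∑ j, firstFace k ι e (deltaAt σ δ a j) f
      = psiValue σ δ x (e * ι (a 0)) (Fin.tail a) f := by
  have hx : e * x * ι (σ.symm (a 0)) = e * ι (a 0) * x + e * ι (δ (σ.symm (a 0))) := by
    rw [mul_assoc, hcomm, AlgEquiv.apply_symm_apply, mul_add, ← mul_assoc]
  simp only [firstFace, psiValue, Fin.sum_univ_succ, deltaAt_zero_zero, tail_deltaAt_zero,
    deltaAt_succ_zero, tail_deltaAt_succ, hx, barTensor_add_left]
  simp only [Fin.tail_def]
  abel

theorem innerFaces_psiValue (hδ : ∀ a b : A, δ (a * b) = δ a * b + σ a * δ b)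
    (e f : E) (a : Fin (n + 1) → A) :
    innerFaces k (e * x) (fun i => σ.symm (a i)) f - innerFaces k e a (x * f)
      - ∑ j, innerFaces k e (deltaAt σ δ a j) f
      = ∑ i : Fin n, ((-1 : ℤ) ^ ((i : ℕ) + 1)) • psiValue σ δ x e (mergeAt a i) f := by
  have hδsum : ∀ i : Fin n, ∑ j : Fin (n + 1), barTensor k e (mergeAt (deltaAt σ δ a j) i) f
      = ∑ j : Fin n, barTensor k e (deltaAt σ δ (mergeAt a i) j) f :=
    sum_mergeAt_deltaAt σ δ hδ
      ((TensorProduct.mk k _ E).flip f ∘ₗ TensorProduct.mk k E _ e |>.compMultilinearMap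
        (PiTensorProduct.tprod k)) a
  simp only [innerFaces, psiValue, mergeAt_comp σ.symm, BarObj.zsmul_sub, BarObj.sum_sub_distrib]
  rw [Finset.sum_comm]
  simp only [← BarObj.zsmul_sum, hδsum]

theorem lastFace_psiValue (hcomm : ∀ a : A, x * ι a = ι (σ a) * x + ι (δ a))
    (e f : E) (a : Fin (n + 1) → A) :
    lastFace k ι (e * x) (fun i => σ.symm (a i)) f - lastFace k ι e a (x * f)
      - ∑ j, lastFace k ι e (deltaAt σ δ a j) f
      = ((-1 : ℤ) ^ (n + 1)) •
          psiValue σ δ x e (Fin.init a) (ι (σ.symm (a (Fin.last n))) * f) := by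
  have hx : x * (ι (σ.symm (a (Fin.last n))) * f)
      = ι (a (Fin.last n)) * (x * f) + ι (δ (σ.symm (a (Fin.last n)))) * f := by
    rw [← mul_assoc, hcomm, AlgEquiv.apply_symm_apply, add_mul, mul_assoc]
  simp only [lastFace, psiValue, Fin.sum_univ_castSucc, init_deltaAt_castSucc,
    deltaAt_castSucc_last, init_deltaAt_last, deltaAt_last_last, hx, barTensor_add_right]
  simp only [Fin.init_def, BarObj.zsmul_sub, BarObj.zsmul_add, BarObj.zsmul_sum]
  abel

end OreChainMap

/-- **The Guccione–Guccione chain map.** Let `E = A[x;σ,δ]` be an Ore extension with `σ` an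
automorphism.  Let `b'₀`, `b'₁` be the differentials of the two bar-type complexes with terms
`E ⊗ A^{⊗n} ⊗ E` (resp. `E ⊗ A^{⊗n} ⊗ {}^{σ⁻¹}E`), and let `ψ'` be the `E`-`E`-bilinear maps
given by the Guccione–Guccione formula (all specified here by their values on pure tensors).
Then `ψ'` is a morphism of complexes: `b'₀ ∘ ψ' = ψ' ∘ b'₁`. -/
theorem ore_extension_psi_chain_map
    (k : Type) [CommRing k] (A : Type) [Ring A] [Algebra k A]
    (E : Type) [Ring E] [Algebra k E]
    (σ : A ≃ₐ[k] A) (δ : A →ₗ[k] A) (ι : A →ₐ[k] E) (x : E)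
    (hOre : IsOreExtension k A E σ δ ι x)
    (B0 B1 : (n : ℕ) → (BarObj k A E (n + 1) →ₗ[k] BarObj k A E n))
    (Ψ : (n : ℕ) → (BarObj k A E n →ₗ[k] BarObj k A E n))
    (hB0 : ∀ (n : ℕ) (e f : E) (a : Fin (n + 1) → A),
      B0 n ((e ⊗ₜ[k] PiTensorProduct.tprod k a) ⊗ₜ[k] f) =
        ((e * ι (a 0)) ⊗ₜ[k] PiTensorProduct.tprod k (fun j : Fin n => a j.succ)) ⊗ₜ[k] f
        + ∑ i : Fin n, ((-1 : ℤ) ^ ((i : ℕ) + 1)) •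
            ((e ⊗ₜ[k] PiTensorProduct.tprod k (mergeAt a i)) ⊗ₜ[k] f)
        + ((-1 : ℤ) ^ (n + 1)) •
            ((e ⊗ₜ[k] PiTensorProduct.tprod k (fun j : Fin n => a j.castSucc)) ⊗ₜ[k]
              (ι (a (Fin.last n)) * f)))
    (hB1 : ∀ (n : ℕ) (e f : E) (a : Fin (n + 1) → A),
      B1 n ((e ⊗ₜ[k] PiTensorProduct.tprod k a) ⊗ₜ[k] f) =
        ((e * ι (a 0)) ⊗ₜ[k] PiTensorProduct.tprod k (fun j : Fin n => a j.succ)) ⊗ₜ[k] f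
        + ∑ i : Fin n, ((-1 : ℤ) ^ ((i : ℕ) + 1)) •
            ((e ⊗ₜ[k] PiTensorProduct.tprod k (mergeAt a i)) ⊗ₜ[k] f)
        + ((-1 : ℤ) ^ (n + 1)) •
            ((e ⊗ₜ[k] PiTensorProduct.tprod k (fun j : Fin n => a j.castSucc)) ⊗ₜ[k]
              (ι (σ.symm (a (Fin.last n))) * f)))
    (hΨ : ∀ (n : ℕ) (e f : E) (a : Fin n → A),
      Ψ n ((e ⊗ₜ[k] PiTensorProduct.tprod k a) ⊗ₜ[k] f) =
        ((e * x) ⊗ₜ[k] PiTensorProduct.tprod k (fun i : Fin n => σ.symm (a i))) ⊗ₜ[k] f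
        - (e ⊗ₜ[k] PiTensorProduct.tprod k a) ⊗ₜ[k] (x * f)
        - ∑ j : Fin n, (e ⊗ₜ[k] PiTensorProduct.tprod k (fun i : Fin n =>
            if (i : ℕ) < (j : ℕ) then a i
            else if i = j then δ (σ.symm (a j))
            else σ.symm (a i))) ⊗ₜ[k] f) :
    ∀ n : ℕ, (B0 n).comp (Ψ (n + 1)) = (Ψ n).comp (B1 n) := by
  obtain ⟨hδ, hcomm, -, -⟩ := hOre
  have hB0' : ∀ n e f a, B0 n (barTensor k e a f)
      = firstFace k ι e a f + innerFaces k e a f + lastFace k ι e a f := hB0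
  have hB1' : ∀ n e f a, B1 n (barTensor k e a f) = firstFace k ι e a f + innerFaces k e a f
      + lastFace k (fun c => ι (σ.symm c)) e a f := hB1
  have hΨ' : ∀ n e f a, Ψ n (barTensor k e a f) = psiValue σ δ x e a f := hΨ
  intro n
  ext e a f
  change B0 n (Ψ (n + 1) (barTensor k e a f)) = Ψ n (B1 n (barTensor k e a f))
  conv_lhs => rw [hΨ', psiValue]; simp only [map_sub, map_sum, hB0']
  conv_rhs =>
    rw [hB1', map_add, map_add]
    simp only [firstFace, innerFaces, lastFace, map_sum, map_zsmul, hΨ']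
  rw [← firstFace_psiValue hcomm, ← innerFaces_psiValue hδ, ← lastFace_psiValue hcomm]
  simp only [Finset.sum_add_distrib]
  abel
end
end

section
/- Let A be a k-algebra, σ a k-algebra automorphism of A, δ a σ-derivation, E = A[x;σ,δ], and ν a k-algebra automorphism of A. Suppose ν' is a k-algebra endomorphism of E such that ν'(a) = σ⁻¹(ν(a)) for all a ∈ A and ν'(x) = ux + b for some u, b ∈ A. Then σ⁻¹(ν(σ(a)))·u = u·ν(a) for all a ∈ A. -/
namespace IsOreExtension

variable {k : Type} [CommRing k] {A : Type} [Ring A] [Algebra k A]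
  {E : Type} [Ring E] [Algebra k E] {σ : A ≃ₐ[k] A} {δ : A →ₗ[k] A} {ι : A →ₐ[k] E} {x : E}

theorem eq_zero_of_mul_x_add_eq_zero (hOre : IsOreExtension k A E σ δ ι x) {a c : A}
    (h : ι a * x + ι c = 0) : a = 0 ∧ c = 0 := by
  have hsum : (Finsupp.single 1 a + Finsupp.single 0 c : ℕ →₀ A).sum
      (fun i a => ι a * x ^ i) = ι a * x + ι c := by
    rw [Finsupp.sum_add_index' (fun _ => by simp) (fun _ _ _ => by rw [map_add, add_mul]),
      Finsupp.sum_single_index (by simp), Finsupp.sum_single_index (by simp), pow_one, pow_zero,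
      mul_one]
  have hcoeff := hOre.indep _ (hsum.trans h)
  exact ⟨by simpa using DFunLike.congr_fun hcoeff 1, by simpa using DFunLike.congr_fun hcoeff 0⟩

theorem mul_x_add_injective (hOre : IsOreExtension k A E σ δ ι x) {a c a' c' : A}
    (h : ι a * x + ι c = ι a' * x + ι c') : a = a' ∧ c = c' := by
  have hdiff : ι (a - a') * x + ι (c - c') = 0 := by
    rw [map_sub, map_sub, sub_mul, sub_add_sub_comm, h, sub_self]
  obtain ⟨ha, hc⟩ := hOre.eq_zero_of_mul_x_add_eq_zero hdiff
  exact ⟨sub_eq_zero.mp ha, sub_eq_zero.mp hc⟩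

theorem mul_x_add_mul (hOre : IsOreExtension k A E σ δ ι x) (u b a : A) :
    (ι u * x + ι b) * ι a = ι (u * σ a) * x + ι (u * δ a + b * a) := by
  rw [add_mul, mul_assoc, hOre.commRule]
  simp only [map_mul, map_add]
  noncomm_ring

/-- Compare the `x`-coefficients of the two sides of `f` applied to `x a = σ(a) x + δ(a)`. -/
theorem map_sigma_mul_eq_mul (hOre : IsOreExtension k A E σ δ ι x) (f : E →+* E) (τ : A → A)
    (hτ : ∀ a, f (ι a) = ι (τ a)) {u b : A} (hx : f x = ι u * x + ι b) (a : A) :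
    τ (σ a) * u = u * σ (τ a) := by
  have h := congrArg f (hOre.commRule a)
  rw [map_mul, map_add, map_mul, hτ, hτ, hτ, hx, hOre.mul_x_add_mul, mul_add, ← mul_assoc,
    ← map_mul, ← map_mul, add_assoc, ← map_add] at h
  exact (hOre.mul_x_add_injective h).1.symm

end IsOreExtension

/-- If `ν'` is an algebra endomorphism of the Ore extension `E = A[x; σ, δ]` with
`ν'|_A = σ⁻¹ ∘ ν` and `ν'(x) = u x + b`, then `σ⁻¹(ν(σ(a))) u = u ν(a)` for all `a ∈ A`. -/
theorem ore_extension_nakayama_u_relation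
    (k : Type) [CommRing k] (A : Type) [Ring A] [Algebra k A]
    (E : Type) [Ring E] [Algebra k E]
    (σ : A ≃ₐ[k] A) (δ : A →ₗ[k] A) (ι : A →ₐ[k] E) (x : E)
    (hOre : IsOreExtension k A E σ δ ι x)
    (ν : A ≃ₐ[k] A) (ν' : E →ₐ[k] E) (u b : A)
    (hA : ∀ a : A, ν' (ι a) = ι (σ.symm (ν a)))
    (hx : ν' x = ι u * x + ι b) :
    ∀ a : A, σ.symm (ν (σ a)) * u = u * ν a := fun a => by
  simpa using hOre.map_sigma_mul_eq_mul ν'.toRingHom (fun a => σ.symm (ν a)) hA hx a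
end
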